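/- In a translation-covariant particle system on ℤ^d in which each labeled particle either fixates at some site or not, and at most one particle can fixate at any given site, the expected number of particles per site that fixate is at most 1. Consequently, if the initial particle density μ exceeds 1, then with positive probability some particle does not fixate. -/

import Mathlib

/-!
Mass transport: by translation invariance, the expected number of particles started at `0`
that fixate somewhere equals the expected number of particles fixating at `0`, summed over
their starting sites. Since the events "particle `(x, j)` fixates at `0`" are disjoint, the
latter is the probability of their union, hence at most `1`. If almost surely every particle
fixates, the first quantity dominates `η₀(0)`, so the density is at most `1`.
-/

open MeasureTheory ProbabilityTheory
open scoped ENNReal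

theorem tsum_transport_out_eq_tsum_transport_in {G M : Type*} [AddGroup G] [AddCommMonoid M]
    [TopologicalSpace M] (f : G → G → M) (hf : ∀ x y v, f (x + v) (y + v) = f x y) :
    ∑' y, f 0 y = ∑' x, f x 0 := by
  have hout : ∀ y, f 0 y = f (-y) 0 := fun y => by simpa using (hf 0 y (-y)).symm
  rw [tsum_congr hout]
  exact (Equiv.neg G).tsum_eq fun x => f x 0

theorem lintegral_tsum_tsum_indicator_one {Ω ι κ : Type*} [MeasurableSpace Ω] [Countable ι]
    [Countable κ] (μ : Measure Ω) {s : ι → κ → Set Ω} (hs : ∀ i k, MeasurableSet (s i k)) :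
    ∫⁻ ω, ∑' i, ∑' k, (s i k).indicator (fun _ => (1 : ℝ≥0∞)) ω ∂μ = ∑' i, ∑' k, μ (s i k) := by
  have hmeas : ∀ i k, Measurable ((s i k).indicator fun _ => (1 : ℝ≥0∞)) := fun i k =>
    measurable_const.indicator (hs i k)
  rw [lintegral_tsum fun i => (Measurable.tsum (hmeas i)).aemeasurable]
  refine tsum_congr fun i => ?_
  rw [lintegral_tsum fun k => (hmeas i k).aemeasurable]
  exact tsum_congr fun k => lintegral_indicator_one (hs i k)

theorem natCast_le_tsum_tsum_indicator_one {Ω ι : Type*} {s : ℕ → ι → Set Ω} {n : ℕ} {ω : Ω}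
    (hs : ∀ j < n, ∃ y, ω ∈ s j y) :
    (n : ℝ≥0∞) ≤ ∑' j, ∑' y, (s j y).indicator (fun _ => (1 : ℝ≥0∞)) ω :=
  calc (n : ℝ≥0∞) = ∑ j ∈ Finset.range n, (1 : ℝ≥0∞) := by simp
    _ ≤ ∑ j ∈ Finset.range n, ∑' y, (s j y).indicator (fun _ => (1 : ℝ≥0∞)) ω := by
      refine Finset.sum_le_sum fun j hj => ?_
      obtain ⟨y, hy⟩ := hs j (Finset.mem_range.mp hj)
      simpa [Set.indicator_of_mem hy] using
        ENNReal.le_tsum (f := fun y => (s j y).indicator (fun _ => (1 : ℝ≥0∞)) ω) y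
    _ ≤ ∑' j, ∑' y, (s j y).indicator (fun _ => (1 : ℝ≥0∞)) ω := ENNReal.sum_le_tsum _

section Fixation

variable {G Ω : Type*} [AddGroup G] [MeasurableSpace Ω] {P : Measure Ω}
  {T : G → Ω → Ω} {A : G → ℕ → G → Set Ω}

theorem measure_fixation_translate (hTpres : ∀ v, MeasurePreserving (T v) P P)
    (hmeasA : ∀ x j y, MeasurableSet (A x j y))
    (hAcov : ∀ v x j y ω, T v ω ∈ A x j y ↔ ω ∈ A (x + v) j (y + v)) (x : G) (j : ℕ) (y v : G) :
    P (A (x + v) j (y + v)) = P (A x j y) := by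
  have hpre : T v ⁻¹' A x j y = A (x + v) j (y + v) := Set.ext (hAcov v x j y)
  rw [← hpre]
  exact (hTpres v).measure_preimage (hmeasA x j y).nullMeasurableSet

theorem lintegral_fixation_count_le_one [Countable G] [IsProbabilityMeasure P]
    (hTpres : ∀ v, MeasurePreserving (T v) P P) (hmeasA : ∀ x j y, MeasurableSet (A x j y))
    (hAcov : ∀ v x j y ω, T v ω ∈ A x j y ↔ ω ∈ A (x + v) j (y + v))
    (hAunique : ∀ y x j x' j', (x, j) ≠ (x', j') → A x j y ∩ A x' j' y = ∅) :
    ∫⁻ ω, ∑' j, ∑' y, (A 0 j y).indicator (fun _ => (1 : ℝ≥0∞)) ω ∂P ≤ 1 :=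
  calc ∫⁻ ω, ∑' j, ∑' y, (A 0 j y).indicator (fun _ => (1 : ℝ≥0∞)) ω ∂P
      = ∑' j, ∑' y, P (A 0 j y) := lintegral_tsum_tsum_indicator_one P fun j y => hmeasA 0 j y
    _ = ∑' j, ∑' x, P (A x j 0) := tsum_congr fun j =>
      tsum_transport_out_eq_tsum_transport_in (fun x y => P (A x j y))
        (measure_fixation_translate hTpres hmeasA hAcov · j)
    _ = ∑' p : G × ℕ, P (A p.1 p.2 0) := ENNReal.tsum_comm.trans ENNReal.tsum_prod.symm
    _ ≤ P Set.univ := tsum_measure_le_measure_univ (fun p => (hmeasA p.1 p.2 0).nullMeasurableSet)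
      fun p q hpq => (Set.disjoint_iff_inter_eq_empty.2 (hAunique 0 p.1 p.2 q.1 q.2 hpq)).aedisjoint
    _ = 1 := measure_univ

end Fixation

theorem density_of_fixating_particles_le_one_general
    {d : ℕ} {Ω : Type*} [MeasurableSpace Ω] (P : Measure Ω) [IsProbabilityMeasure P]
    (T : (Fin d → ℤ) → Ω → Ω)
    (hTpres : ∀ v, MeasurePreserving (T v) P P)
    (η₀ : Ω → (Fin d → ℤ) → ℕ)
    (A : (Fin d → ℤ) → ℕ → (Fin d → ℤ) → Set Ω)
    (hmeasA : ∀ x j y, MeasurableSet (A x j y))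
    (hAcov : ∀ (v x : Fin d → ℤ) (j : ℕ) (y : Fin d → ℤ) (ω : Ω),
      T v ω ∈ A x j y ↔ ω ∈ A (x + v) j (y + v))
    (hAunique : ∀ y : Fin d → ℤ, ∀ x j x' j', (x, j) ≠ (x', j') → A x j y ∩ A x' j' y = ∅) :
    (∫⁻ ω, ∑' (j : ℕ) (y : Fin d → ℤ), (A 0 j y).indicator (fun _ => (1 : ℝ≥0∞)) ω ∂P ≤ 1) ∧
      (1 < ∫⁻ ω, (η₀ ω 0 : ℝ≥0∞) ∂P →
        0 < P {ω | ∃ (x : Fin d → ℤ) (j : ℕ), j < η₀ ω x ∧ ∀ y, ω ∉ A x j y}) := by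
  have hcount := lintegral_fixation_count_le_one hTpres hmeasA hAcov hAunique
  refine ⟨hcount, fun hμ => pos_iff_ne_zero.2 fun hnull => hμ.not_ge ?_⟩
  have hall_fix : ∀ᵐ ω ∂P, ∀ j < η₀ ω 0, ∃ y, ω ∈ A 0 j y := by
    filter_upwards [measure_eq_zero_iff_ae_notMem.1 hnull] with ω hω j hj
    by_contra! h
    exact hω ⟨0, j, hj, h⟩
  calc ∫⁻ ω, (η₀ ω 0 : ℝ≥0∞) ∂P
      ≤ ∫⁻ ω, ∑' j, ∑' y, (A 0 j y).indicator (fun _ => (1 : ℝ≥0∞)) ω ∂P :=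
        lintegral_mono_ae (hall_fix.mono fun _ => natCast_le_tsum_tsum_indicator_one)
    _ ≤ 1 := hcount

/-- **Density of fixating particles is at most 1.** In a translation-covariant particle
system on `ℤ^d`, with `A x j y` the event that particle `(x,j)` fixates at site `y`
(only existing particles can fixate, and at most one particle fixates at each site),
the expected number of particles per site that fixate is at most `1`. Consequently,
if the initial density exceeds `1`, then with positive probability some particle
does not fixate. -/
theorem density_of_fixating_particles_le_one
    {d : ℕ} {Ω : Type*} [MeasurableSpace Ω] (P : Measure Ω) [IsProbabilityMeasure P]
    (T : (Fin d → ℤ) → Ω → Ω)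
    (hT0 : T 0 = id)
    (hTadd : ∀ v w : Fin d → ℤ, T (v + w) = T v ∘ T w)
    (hTpres : ∀ v, MeasurePreserving (T v) P P)
    (η₀ : Ω → (Fin d → ℤ) → ℕ)
    (hmeasη : ∀ x, Measurable fun ω => η₀ ω x)
    (hηcov : ∀ (v x : Fin d → ℤ) (ω : Ω), η₀ (T v ω) x = η₀ ω (x + v))
    (A : (Fin d → ℤ) → ℕ → (Fin d → ℤ) → Set Ω)
    (hmeasA : ∀ x j y, MeasurableSet (A x j y))
    (hAcov : ∀ (v x : Fin d → ℤ) (j : ℕ) (y : Fin d → ℤ) (ω : Ω),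
      T v ω ∈ A x j y ↔ ω ∈ A (x + v) j (y + v))
    (hAexists : ∀ x j y, A x j y ⊆ {ω | j < η₀ ω x})
    (hAunique : ∀ y : Fin d → ℤ, ∀ x j x' j', (x, j) ≠ (x', j') → A x j y ∩ A x' j' y = ∅) :
    (∫⁻ ω, ∑' (j : ℕ) (y : Fin d → ℤ), (A 0 j y).indicator (fun _ => (1 : ℝ≥0∞)) ω ∂P ≤ 1) ∧
      (1 < ∫⁻ ω, (η₀ ω 0 : ℝ≥0∞) ∂P →
        0 < P {ω | ∃ (x : Fin d → ℤ) (j : ℕ), j < η₀ ω x ∧ ∀ y, ω ∉ A x j y}) :=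
  density_of_fixating_particles_le_one_general P T hTpres η₀ A hmeasA hAcov hAunique
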